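/- The min-sum-of-radii k-center cost function in R^d, cost(C) = sum over clusters C of radius_∞(C), satisfies the expansion property with f(k) = k: for any finite set S', any weak r-packing R of S', and any k >= 2, Opt_k(R) <= Opt_k(S') <= Opt_k(R) + r·k. -/

import Mathlib

/-- A `k`-clustering of `S`: a partition of `S` into at most `k` nonempty parts. -/
def IsClustering {d : ℕ} (S : Finset (EuclideanSpace ℝ (Fin d))) (k : ℕ)
    (𝒞 : Finset (Finset (EuclideanSpace ℝ (Fin d)))) : Prop :=
  𝒞.card ≤ k ∧ (∀ C ∈ 𝒞, C.Nonempty ∧ C ⊆ S) ∧ (∀ p ∈ S, ∃ C ∈ 𝒞, p ∈ C) ∧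
  (∀ C ∈ 𝒞, ∀ C' ∈ 𝒞, C ≠ C' → ∀ p, p ∈ C → p ∉ C')

/-- The optimal cost of a `k`-clustering of `S` under cost function `cost`. -/
noncomputable def Opt {d : ℕ} (cost : Finset (Finset (EuclideanSpace ℝ (Fin d))) → ℝ)
    (k : ℕ) (S : Finset (EuclideanSpace ℝ (Fin d))) : ℝ :=
  sInf {x | ∃ 𝒞, IsClustering S k 𝒞 ∧ cost 𝒞 = x}

/-- The `L∞`-radius of a finite point set: half the edge length of a smallest
enclosing axis-aligned cube. -/
noncomputable def radiusLinf {d : ℕ} (C : Finset (EuclideanSpace ℝ (Fin d))) : ℝ :=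
  sSup {x | ∃ p ∈ C, ∃ q ∈ C, ∃ i, x = |p i - q i|} / 2

/-- The min-sum-of-radii rectilinear `k`-center cost: the sum of the `L∞`-radii
of the clusters. -/
noncomputable def costLinfSum {d : ℕ} (𝒞 : Finset (Finset (EuclideanSpace ℝ (Fin d)))) : ℝ :=
  ∑ C ∈ 𝒞, radiusLinf C

/-!
Both inequalities come from pulling a clustering back along a map `g`. Pulling a clustering of
`S'` back along the inclusion `R ⊆ S'` restricts every cluster to `R`, which cannot enlarge a
radius. Pulling a clustering of `R` back along a map sending each point of `S'` to an `r`-close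
point of `R` moves every point by at most `r` in each coordinate, so each of the at most `k`
radii grows by at most `r`.
-/

open Finset

section

variable {d : ℕ}

theorem radiusLinf_nonneg (C : Finset (EuclideanSpace ℝ (Fin d))) : 0 ≤ radiusLinf C := by
  refine div_nonneg (Real.sSup_nonneg ?_) zero_le_two
  rintro _ ⟨p, -, q, -, i, rfl⟩
  exact abs_nonneg _

theorem abs_sub_le_two_mul_radiusLinf {C : Finset (EuclideanSpace ℝ (Fin d))}
    {p q : EuclideanSpace ℝ (Fin d)} (hp : p ∈ C) (hq : q ∈ C) (i : Fin d) :
    |p i - q i| ≤ 2 * radiusLinf C := by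
  have hfin : {x | ∃ p ∈ C, ∃ q ∈ C, ∃ i, x = |p i - q i|}.Finite := by
    refine ((C ×ˢ C ×ˢ (univ : Finset (Fin d))).finite_toSet.image
      fun t => |t.1 t.2.2 - t.2.1 t.2.2|).subset ?_
    rintro _ ⟨p, hp, q, hq, i, rfl⟩
    exact ⟨(p, q, i), by simp [hp, hq], rfl⟩
  have := le_csSup hfin.bddAbove ⟨p, hp, q, hq, i, rfl⟩
  rw [radiusLinf]
  linarith

theorem radiusLinf_le_of_forall_abs_sub_le {C : Finset (EuclideanSpace ℝ (Fin d))} {c : ℝ}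
    (hc : 0 ≤ c) (h : ∀ p ∈ C, ∀ q ∈ C, ∀ i, |p i - q i| ≤ 2 * c) : radiusLinf C ≤ c := by
  rw [radiusLinf, div_le_iff₀' zero_lt_two]
  refine Real.sSup_le ?_ (by positivity)
  rintro _ ⟨p, hp, q, hq, i, rfl⟩
  exact h p hp q hq i

theorem radiusLinf_le_add_of_dist_le {C D : Finset (EuclideanSpace ℝ (Fin d))}
    {g : EuclideanSpace ℝ (Fin d) → EuclideanSpace ℝ (Fin d)} {r : ℝ} (hr : 0 ≤ r)
    (hgC : ∀ p ∈ D, g p ∈ C) (hg : ∀ p ∈ D, dist p (g p) ≤ r) :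
    radiusLinf D ≤ radiusLinf C + r := by
  refine radiusLinf_le_of_forall_abs_sub_le (by linarith [radiusLinf_nonneg C]) ?_
  intro p hp q hq i
  have hpg : |p i - g p i| ≤ r := (PiLp.dist_apply_le p (g p) i).trans (hg p hp)
  have hqg : |g q i - q i| ≤ r := by
    rw [abs_sub_comm]
    exact (PiLp.dist_apply_le q (g q) i).trans (hg q hq)
  have hC := abs_sub_le_two_mul_radiusLinf (hgC p hp) (hgC q hq) i
  calc |p i - q i| ≤ |p i - g p i| + |g p i - q i| := abs_sub_le _ _ _
    _ ≤ |p i - g p i| + (|g p i - g q i| + |g q i - q i|) := by gcongr; exact abs_sub_le _ _ _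
    _ ≤ 2 * (radiusLinf C + r) := by linarith

theorem costLinfSum_nonneg (𝒞 : Finset (Finset (EuclideanSpace ℝ (Fin d)))) :
    0 ≤ costLinfSum 𝒞 :=
  sum_nonneg fun C _ => radiusLinf_nonneg C

theorem exists_isClustering (S : Finset (EuclideanSpace ℝ (Fin d))) {k : ℕ} (hk : 1 ≤ k) :
    ∃ 𝒞, IsClustering S k 𝒞 := by
  rcases S.eq_empty_or_nonempty with rfl | hS
  · exact ⟨∅, by simp [IsClustering]⟩
  · refine ⟨{S}, by simpa using hk, ?_, fun p hp => ⟨S, mem_singleton_self S, hp⟩, ?_⟩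
    · simp [hS]
    · simp

theorem opt_le_add_of_forall_isClustering
    {cost : Finset (Finset (EuclideanSpace ℝ (Fin d))) → ℝ} {k : ℕ}
    {S T : Finset (EuclideanSpace ℝ (Fin d))} {δ : ℝ} (hcost : BddBelow (Set.range cost))
    (hT : ∃ 𝒞, IsClustering T k 𝒞)
    (h : ∀ 𝒞, IsClustering T k 𝒞 → ∃ 𝒟, IsClustering S k 𝒟 ∧ cost 𝒟 ≤ cost 𝒞 + δ) :
    Opt cost k S ≤ Opt cost k T + δ := by
  rw [← sub_le_iff_le_add]
  obtain ⟨𝒞₀, h𝒞₀⟩ := hT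
  refine le_csInf ⟨cost 𝒞₀, 𝒞₀, h𝒞₀, rfl⟩ ?_
  rintro _ ⟨𝒞, h𝒞, rfl⟩
  obtain ⟨𝒟, h𝒟, hle⟩ := h 𝒞 h𝒞
  have hbdd : BddBelow {x | ∃ 𝒟, IsClustering S k 𝒟 ∧ cost 𝒟 = x} :=
    hcost.mono <| by rintro _ ⟨𝒟, -, rfl⟩; exact ⟨𝒟, rfl⟩
  have hopt : Opt cost k S ≤ cost 𝒟 := csInf_le hbdd ⟨𝒟, h𝒟, rfl⟩
  linarith

noncomputable def clusteringPullback (S : Finset (EuclideanSpace ℝ (Fin d)))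
    (g : EuclideanSpace ℝ (Fin d) → EuclideanSpace ℝ (Fin d))
    (𝒞 : Finset (Finset (EuclideanSpace ℝ (Fin d)))) :
    Finset (Finset (EuclideanSpace ℝ (Fin d))) :=
  (𝒞.image fun C => S.filter (g · ∈ C)).filter Finset.Nonempty

theorem mem_clusteringPullback {S D : Finset (EuclideanSpace ℝ (Fin d))}
    {g : EuclideanSpace ℝ (Fin d) → EuclideanSpace ℝ (Fin d)}
    {𝒞 : Finset (Finset (EuclideanSpace ℝ (Fin d)))} :
    D ∈ clusteringPullback S g 𝒞 ↔ (∃ C ∈ 𝒞, S.filter (g · ∈ C) = D) ∧ D.Nonempty := by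
  simp only [clusteringPullback, mem_filter, mem_image]

theorem IsClustering.pullback {S T : Finset (EuclideanSpace ℝ (Fin d))} {k : ℕ}
    {𝒞 : Finset (Finset (EuclideanSpace ℝ (Fin d)))} (h𝒞 : IsClustering T k 𝒞)
    {g : EuclideanSpace ℝ (Fin d) → EuclideanSpace ℝ (Fin d)} (hg : ∀ p ∈ S, g p ∈ T) :
    IsClustering S k (clusteringPullback S g 𝒞) := by
  obtain ⟨hcard, -, hcover, hdisj⟩ := h𝒞
  simp only [IsClustering, mem_clusteringPullback]
  refine ⟨(card_filter_le _ _).trans (card_image_le.trans hcard), ?_, ?_, ?_⟩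
  · rintro _ ⟨⟨C, -, rfl⟩, hne⟩
    exact ⟨hne, filter_subset _ _⟩
  · intro p hp
    obtain ⟨C, hC, hpC⟩ := hcover (g p) (hg p hp)
    have hp' : p ∈ S.filter (g · ∈ C) := mem_filter.2 ⟨hp, hpC⟩
    exact ⟨_, ⟨⟨C, hC, rfl⟩, ⟨p, hp'⟩⟩, hp'⟩
  · rintro _ ⟨⟨C, hC, rfl⟩, -⟩ _ ⟨⟨C', hC', rfl⟩, -⟩ hne p hp hp'
    exact hdisj C hC C' hC' (fun hCC' => hne (hCC' ▸ rfl)) (g p) (mem_filter.1 hp).2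
      (mem_filter.1 hp').2

theorem costLinfSum_clusteringPullback_le {S : Finset (EuclideanSpace ℝ (Fin d))}
    {g : EuclideanSpace ℝ (Fin d) → EuclideanSpace ℝ (Fin d)} {r : ℝ} (hr : 0 ≤ r)
    (hg : ∀ p ∈ S, dist p (g p) ≤ r) (𝒞 : Finset (Finset (EuclideanSpace ℝ (Fin d)))) :
    costLinfSum (clusteringPullback S g 𝒞) ≤ costLinfSum 𝒞 + r * 𝒞.card :=
  calc costLinfSum (clusteringPullback S g 𝒞)
      ≤ ∑ D ∈ 𝒞.image fun C => S.filter (g · ∈ C), radiusLinf D :=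
        sum_le_sum_of_subset_of_nonneg (filter_subset _ _) fun D _ _ => radiusLinf_nonneg D
    _ ≤ ∑ C ∈ 𝒞, radiusLinf (S.filter (g · ∈ C)) :=
        sum_image_le_of_nonneg fun D _ => radiusLinf_nonneg D
    _ ≤ ∑ C ∈ 𝒞, (radiusLinf C + r) := sum_le_sum fun C _ =>
        radiusLinf_le_add_of_dist_le hr (fun p hp => (mem_filter.1 hp).2)
          (fun p hp => hg p (mem_filter.1 hp).1)
    _ = costLinfSum 𝒞 + r * 𝒞.card := by
        rw [sum_add_distrib, sum_const, nsmul_eq_mul, mul_comm]; rfl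

theorem opt_costLinfSum_le_add_of_dist_le {S T : Finset (EuclideanSpace ℝ (Fin d))}
    {k : ℕ} (hk : 1 ≤ k) {r : ℝ} (hr : 0 ≤ r)
    {g : EuclideanSpace ℝ (Fin d) → EuclideanSpace ℝ (Fin d)}
    (hgT : ∀ p ∈ S, g p ∈ T) (hg : ∀ p ∈ S, dist p (g p) ≤ r) :
    Opt costLinfSum k S ≤ Opt costLinfSum k T + r * k := by
  refine opt_le_add_of_forall_isClustering ⟨0, ?_⟩ (exists_isClustering T hk) ?_
  · rintro _ ⟨𝒞, rfl⟩
    exact costLinfSum_nonneg 𝒞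
  · intro 𝒞 h𝒞
    refine ⟨clusteringPullback S g 𝒞, h𝒞.pullback hgT, ?_⟩
    have hcard : r * 𝒞.card ≤ r * k := mul_le_mul_of_nonneg_left (by exact_mod_cast h𝒞.1) hr
    linarith [costLinfSum_clusteringPullback_le hr hg 𝒞]

end

theorem minsum_radii_expansion_general (d : ℕ)
    (S' R : Finset (EuclideanSpace ℝ (Fin d))) (r : ℝ) (hr : 0 ≤ r) (hRS : R ⊆ S')
    (hpack : ∀ p ∈ S', ∃ q ∈ R, dist p q ≤ r)
    (k : ℕ) (hk : 2 ≤ k) :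
    Opt costLinfSum k R ≤ Opt costLinfSum k S' ∧
    Opt costLinfSum k S' ≤ Opt costLinfSum k R + r * k := by
  have hk₁ : 1 ≤ k := one_le_two.trans hk
  choose! g hgR hg using hpack
  constructor
  · simpa using opt_costLinfSum_le_add_of_dist_le (g := id) hk₁ le_rfl
      (fun p hp => hRS hp) (fun p _ => (dist_self p).le)
  · exact opt_costLinfSum_le_add_of_dist_le hk₁ hr hgR hg

/-- The min-sum-of-radii rectilinear `k`-center cost function
satisfies the expansion property with `f(k) = k`:
`Opt_k(R) ≤ Opt_k(S') ≤ Opt_k(R) + r·k` for any weak `r`-packing `R` of `S'`. -/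
theorem minsum_radii_expansion (d : ℕ) (hd : 0 < d)
    (S' R : Finset (EuclideanSpace ℝ (Fin d))) (r : ℝ) (hr : 0 ≤ r) (hRS : R ⊆ S')
    (hpack : ∀ p ∈ S', ∃ q ∈ R, dist p q ≤ r)
    (k : ℕ) (hk : 2 ≤ k) :
    Opt costLinfSum k R ≤ Opt costLinfSum k S' ∧
    Opt costLinfSum k S' ≤ Opt costLinfSum k R + r * k :=
  minsum_radii_expansion_general d S' R r hr hRS hpack k hk
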